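/- arXiv:1202.4338 — 2 statements merged into one kernel-verified Lean document; each statement's English description precedes it below -/
import Mathlib

section
/- Let d ≥ 1, ω ≥ 0 and M > 0. Let 𝒜 = (A_k)_{k∈ℤ+} be a sequence of linear isomorphisms of ℝ^d such that ‖A_k‖ ≤ M and ‖A_k⁻¹‖ ≤ M for all k ∈ ℤ+. If 𝒜 is hyperbolic on ℤ+, then 𝒜 has Perron property B_ω(ℤ+): for every sequence f ∈ N_ω(ℤ+) with f_0 = 0 there exists a sequence x ∈ N_ω(ℤ+) satisfying x_{k+1} = A_k x_k + f_{k+1} for all k ≥ 0. -/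
noncomputable section

open Filter Topology

/-- `ℝ^d`. -/
abbrev Ed (d : ℕ) := EuclideanSpace ℝ (Fin d)

/-- The weight `(|k| + 1) ^ ω`. -/
noncomputable def wt (ω : ℝ) (k : ℤ) : ℝ := (|(k : ℝ)| + 1) ^ ω

/-- `PhiNat A l n = A (l+n-1) ∘ … ∘ A l`. -/
noncomputable def PhiNat {d : ℕ} (A : ℤ → (Ed d ≃L[ℝ] Ed d)) (l : ℤ) :
    ℕ → (Ed d ≃L[ℝ] Ed d)
  | 0 => ContinuousLinearEquiv.refl ℝ (Ed d)
  | n + 1 => (PhiNat A l n).trans (A (l + n))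

/-- The Cauchy matrix `Φ_{m,l}`. -/
noncomputable def Phi {d : ℕ} (A : ℤ → (Ed d ≃L[ℝ] Ed d)) (m l : ℤ) : Ed d ≃L[ℝ] Ed d :=
  if l ≤ m then PhiNat A l (m - l).toNat else (PhiNat A m (l - m).toNat).symm

/-- Hyperbolicity on `I` with explicit data. -/
def HyperbolicOnWith {d : ℕ} (A : ℤ → (Ed d ≃L[ℝ] Ed d)) (I : Set ℤ) (K lam : ℝ)
    (P Q : ℤ → (Ed d →L[ℝ] Ed d)) : Prop :=
  0 < K ∧ 0 < lam ∧ lam < 1 ∧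
  (∀ k ∈ I, P k + Q k = 1) ∧
  (∀ k ∈ I, (P k).comp (P k) = P k ∧ (Q k).comp (Q k) = Q k) ∧
  (∀ k ∈ I, IsCompl (LinearMap.range (P k : Ed d →ₗ[ℝ] Ed d)) (LinearMap.range (Q k : Ed d →ₗ[ℝ] Ed d))) ∧
  (∀ k ∈ I, k + 1 ∈ I →
      (A k) '' (LinearMap.range (P k : Ed d →ₗ[ℝ] Ed d) : Set (Ed d)) = (LinearMap.range (P (k + 1) : Ed d →ₗ[ℝ] Ed d) : Set (Ed d)) ∧
      (A k) '' (LinearMap.range (Q k : Ed d →ₗ[ℝ] Ed d) : Set (Ed d)) = (LinearMap.range (Q (k + 1) : Ed d →ₗ[ℝ] Ed d) : Set (Ed d))) ∧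
  (∀ l ∈ I, ∀ k ∈ I, l ≤ k → ∀ v ∈ LinearMap.range (P l : Ed d →ₗ[ℝ] Ed d),
      ‖(Phi A k l) v‖ ≤ K * lam ^ (k - l).toNat * ‖v‖) ∧
  (∀ l ∈ I, ∀ k ∈ I, k ≤ l → ∀ v ∈ LinearMap.range (Q l : Ed d →ₗ[ℝ] Ed d),
      ‖(Phi A k l) v‖ ≤ K * lam ^ (l - k).toNat * ‖v‖) ∧
  (∀ k ∈ I, ‖P k‖ ≤ K ∧ ‖Q k‖ ≤ K)

/-- The sequence `A` is hyperbolic on `I`. -/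
def IsHyperbolicOn {d : ℕ} (A : ℤ → (Ed d ≃L[ℝ] Ed d)) (I : Set ℤ) : Prop :=
  ∃ (K lam : ℝ) (P Q : ℤ → (Ed d →L[ℝ] Ed d)), HyperbolicOnWith A I K lam P Q

/-- Perron property `B_ω(ℤ+)`. -/
def PerronBPos {d : ℕ} (ω : ℝ) (A : ℤ → (Ed d ≃L[ℝ] Ed d)) : Prop :=
  ∀ f : ℤ → Ed d, f 0 = 0 → (∃ C : ℝ, ∀ k : ℤ, 0 ≤ k → ‖f k‖ * wt ω k ≤ C) →
    ∃ x : ℤ → Ed d, (∃ C : ℝ, ∀ k : ℤ, 0 ≤ k → ‖x k‖ * wt ω k ≤ C) ∧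
      ∀ k : ℤ, 0 ≤ k → x (k + 1) = A k (x k) + f (k + 1)

/-- Perron property `B_ω(ℤ)`. -/
def PerronBZ {d : ℕ} (ω : ℝ) (A : ℤ → (Ed d ≃L[ℝ] Ed d)) : Prop :=
  ∀ f : ℤ → Ed d, (∃ C : ℝ, ∀ k : ℤ, ‖f k‖ * wt ω k ≤ C) →
    ∃ x : ℤ → Ed d, (∃ C : ℝ, ∀ k : ℤ, ‖x k‖ * wt ω k ≤ C) ∧
      ∀ k : ℤ, x (k + 1) = A k (x k) + f (k + 1)

/-- `B^+(𝒜)`. -/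
def Bplus {d : ℕ} (A : ℤ → (Ed d ≃L[ℝ] Ed d)) : Set (Ed d) :=
  {v | Tendsto (fun k : ℤ => ‖(Phi A k 0) v‖) atTop (𝓝 0)}

/-- `B^-(𝒜)`. -/
def Bminus {d : ℕ} (A : ℤ → (Ed d ≃L[ℝ] Ed d)) : Set (Ed d) :=
  {v | Tendsto (fun k : ℤ => ‖(Phi A k 0) v‖) atBot (𝓝 0)}

/-!
The solution is given by the Green's function of the dichotomy,
`x_k = ∑_{0 ≤ l ≤ k} Φ_{k,l} P_l f_l - ∑_{l > k} Φ_{k,l} Q_l f_l`: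
the stable components of `f` are propagated forward, the unstable ones backward from infinity,
so both series are dominated by geometric ones. Since `k + 1 ≤ (l + 1)(k - l + 1)` for
`0 ≤ l ≤ k`, the weight grows at most polynomially along a stable term, and the weighted norm of
`x` is bounded by `K² C (∑ λ^m (m + 1)^ω + (1 - λ)⁻¹)`.
-/

section CauchyMatrix

variable {d : ℕ} (A : ℤ → (Ed d ≃L[ℝ] Ed d))

theorem phiNat_succ_apply (l : ℤ) (n : ℕ) (x : Ed d) :
    PhiNat A l (n + 1) x = A (l + n) (PhiNat A l n x) := rfl

theorem phiNat_succ_eq_trans (l : ℤ) (n : ℕ) :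
    PhiNat A l (n + 1) = (A l).trans (PhiNat A (l + 1) n) := by
  induction n with
  | zero => ext x; simp [PhiNat]
  | succ n ih =>
    refine ContinuousLinearEquiv.ext (funext fun x => ?_)
    have e : l + ((n + 1 : ℕ) : ℤ) = l + 1 + n := by push_cast; ring
    rw [phiNat_succ_apply, ih, ContinuousLinearEquiv.trans_apply, ContinuousLinearEquiv.trans_apply,
      phiNat_succ_apply, e]

theorem phi_add_natCast_self (l : ℤ) (n : ℕ) : Phi A (l + n) l = PhiNat A l n := by
  simp [Phi]

theorem phi_self_add_natCast (m : ℤ) (n : ℕ) : Phi A m (m + n) = (PhiNat A m n).symm := by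
  rcases n.eq_zero_or_pos with rfl | hn
  · ext x; simp [Phi, PhiNat]
  · rw [Phi, if_neg (by omega), show (m + n - m).toNat = n by omega]

theorem phi_self_apply (k : ℤ) (x : Ed d) : Phi A k k x = x := by
  simp [Phi, PhiNat]

theorem apply_phi_apply (k l : ℤ) (x : Ed d) : A k (Phi A k l x) = Phi A (k + 1) l x := by
  rcases le_or_gt l k with hlk | hkl
  · obtain ⟨n, rfl⟩ : ∃ n : ℕ, k = l + n := ⟨(k - l).toNat, by omega⟩
    rw [phi_add_natCast_self, add_assoc, ← Nat.cast_one, ← Nat.cast_add, phi_add_natCast_self,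
      phiNat_succ_apply]
  · obtain ⟨n, rfl⟩ : ∃ n : ℕ, l = k + 1 + n := ⟨(l - k - 1).toNat, by omega⟩
    have e : k + 1 + (n : ℤ) = k + (n + 1 : ℕ) := by push_cast; ring
    rw [phi_self_add_natCast A (k + 1), e, phi_self_add_natCast, phiNat_succ_eq_trans]
    simp [ContinuousLinearEquiv.symm_trans_apply]

end CauchyMatrix

theorem wt_pos (ω : ℝ) (k : ℤ) : 0 < wt ω k := by
  unfold wt; positivity

theorem nonneg_of_norm_mul_wt_le {E : Type*} [SeminormedAddCommGroup E] {ω C : ℝ} {k : ℤ} {v : E}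
    (h : ‖v‖ * wt ω k ≤ C) : 0 ≤ C :=
  (mul_nonneg (norm_nonneg v) (wt_pos ω k).le).trans h

theorem wt_mono {ω : ℝ} (hω : 0 ≤ ω) {a b : ℤ} (ha : 0 ≤ a) (hab : a ≤ b) : wt ω a ≤ wt ω b := by
  unfold wt
  gcongr

theorem wt_le_wt_mul {ω : ℝ} (hω : 0 ≤ ω) {l k : ℤ} (hl : 0 ≤ l) (hlk : l ≤ k) :
    wt ω k ≤ wt ω l * (((k - l).toNat : ℝ) + 1) ^ ω := by
  unfold wt
  rw [← Real.mul_rpow (by positivity) (by positivity)]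
  gcongr
  have hl' : (0 : ℝ) ≤ l := by exact_mod_cast hl
  have hlk' : (l : ℝ) ≤ k := by exact_mod_cast hlk
  have hcast : ((k - l).toNat : ℝ) = k - l := by
    exact_mod_cast Int.toNat_of_nonneg (sub_nonneg.2 hlk)
  rw [abs_of_nonneg hl', abs_of_nonneg (hl'.trans hlk'), hcast]
  nlinarith

theorem summable_pow_mul_add_one_rpow {lam : ℝ} (h0 : 0 < lam) (h1 : lam < 1) (ω : ℝ) :
    Summable (fun m : ℕ => lam ^ m * ((m : ℝ) + 1) ^ ω) := by
  obtain ⟨N, hN⟩ := exists_nat_ge ω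
  have hshift : Summable (fun m : ℕ => ((m + 1 : ℕ) : ℝ) ^ N * lam ^ (m + 1)) :=
    (summable_nat_add_iff (f := fun m : ℕ => (m : ℝ) ^ N * lam ^ m) 1).mpr
      (summable_pow_mul_geometric_of_norm_lt_one N (by rwa [Real.norm_of_nonneg h0.le]))
  refine Summable.of_nonneg_of_le (fun m => by positivity) (fun m => ?_) (hshift.mul_left lam⁻¹)
  calc lam ^ m * ((m : ℝ) + 1) ^ ω ≤ lam ^ m * ((m : ℝ) + 1) ^ (N : ℝ) := by
        gcongr
        linarith [(m.cast_nonneg : (0 : ℝ) ≤ m)]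
    _ = lam⁻¹ * (((m + 1 : ℕ) : ℝ) ^ N * lam ^ (m + 1)) := by
        rw [Real.rpow_natCast, pow_succ]
        field_simp
        push_cast
        ring

section GreenSolution

variable {d : ℕ} (A : ℤ → (Ed d ≃L[ℝ] Ed d)) (P Q : ℤ → (Ed d →L[ℝ] Ed d)) (f : ℤ → Ed d)

def stablePart (k : ℤ) : Ed d :=
  ∑ l ∈ Finset.range (k.toNat + 1), Phi A k l (P l (f l))

def unstableTerm (k : ℤ) (n : ℕ) : Ed d :=
  Phi A k (k + 1 + n) (Q (k + 1 + n) (f (k + 1 + n)))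

def unstablePart (k : ℤ) : Ed d :=
  ∑' n : ℕ, unstableTerm A Q f k n

variable {A P Q f}

theorem stablePart_succ {k : ℤ} (hk : 0 ≤ k) :
    stablePart A P f (k + 1) = A k (stablePart A P f k) + P (k + 1) (f (k + 1)) := by
  have h1 : (k + 1).toNat = k.toNat + 1 := by omega
  have h2 : ((k.toNat + 1 : ℕ) : ℤ) = k + 1 := by omega
  simp only [stablePart, map_sum, apply_phi_apply, h1, Finset.sum_range_succ _ (k.toNat + 1), h2,
    phi_self_apply]

theorem unstablePart_succ {k : ℤ} (hs : Summable (unstableTerm A Q f k)) :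
    A k (unstablePart A Q f k) = Q (k + 1) (f (k + 1)) + unstablePart A Q f (k + 1) := by
  have hmap : HasSum (fun n => A k (unstableTerm A Q f k n)) (A k (unstablePart A Q f k)) :=
    hs.hasSum.mapL (A k : Ed d →L[ℝ] Ed d)
  rw [← hmap.tsum_eq, hmap.summable.tsum_eq_zero_add]
  congr 1
  · simp [unstableTerm, apply_phi_apply, phi_self_apply]
  · refine tsum_congr fun n => ?_
    have e : k + 1 + ((n + 1 : ℕ) : ℤ) = k + 1 + 1 + n := by push_cast; ring
    simp only [unstableTerm, apply_phi_apply, e]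

theorem stablePart_sub_unstablePart_succ {k : ℤ} (hk : 0 ≤ k) (hPQ : P (k + 1) + Q (k + 1) = 1)
    (hs : Summable (unstableTerm A Q f k)) :
    stablePart A P f (k + 1) - unstablePart A Q f (k + 1)
      = A k (stablePart A P f k - unstablePart A Q f k) + f (k + 1) := by
  have hsplit : P (k + 1) (f (k + 1)) + Q (k + 1) (f (k + 1)) = f (k + 1) := by
    simpa using DFunLike.congr_fun hPQ (f (k + 1))
  rw [stablePart_succ hk, map_sub, unstablePart_succ hs]
  linear_combination (norm := module) hsplit

end GreenSolution

namespace HyperbolicOnWith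

variable {d : ℕ} {A : ℤ → (Ed d ≃L[ℝ] Ed d)} {I : Set ℤ} {K lam : ℝ}
  {P Q : ℤ → (Ed d →L[ℝ] Ed d)}

theorem lam_pos (hH : HyperbolicOnWith A I K lam P Q) : 0 < lam := hH.2.1

theorem lam_lt_one (hH : HyperbolicOnWith A I K lam P Q) : lam < 1 := hH.2.2.1

theorem proj_add_proj (hH : HyperbolicOnWith A I K lam P Q) {k : ℤ} (hk : k ∈ I) :
    P k + Q k = 1 :=
  hH.2.2.2.1 k hk

theorem norm_phi_apply_stable_le (hH : HyperbolicOnWith A I K lam P Q) {k l : ℤ} (hl : l ∈ I)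
    (hk : k ∈ I) (hlk : l ≤ k) (v : Ed d) :
    ‖Phi A k l (P l v)‖ ≤ K ^ 2 * lam ^ (k - l).toNat * ‖v‖ := by
  obtain ⟨hK, hlam, -, -, -, -, -, hstable, -, hnorm⟩ := hH
  calc ‖Phi A k l (P l v)‖ ≤ K * lam ^ (k - l).toNat * ‖P l v‖ :=
        hstable l hl k hk hlk _ ⟨v, rfl⟩
    _ ≤ K * lam ^ (k - l).toNat * (K * ‖v‖) := by
        gcongr
        exact (P l).le_of_opNorm_le (hnorm l hl).1 v
    _ = K ^ 2 * lam ^ (k - l).toNat * ‖v‖ := by ring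

theorem norm_phi_apply_unstable_le (hH : HyperbolicOnWith A I K lam P Q) {k l : ℤ} (hk : k ∈ I)
    (hl : l ∈ I) (hkl : k ≤ l) (v : Ed d) :
    ‖Phi A k l (Q l v)‖ ≤ K ^ 2 * lam ^ (l - k).toNat * ‖v‖ := by
  obtain ⟨hK, hlam, -, -, -, -, -, -, hunstable, hnorm⟩ := hH
  calc ‖Phi A k l (Q l v)‖ ≤ K * lam ^ (l - k).toNat * ‖Q l v‖ :=
        hunstable l hl k hk hkl _ ⟨v, rfl⟩
    _ ≤ K * lam ^ (l - k).toNat * (K * ‖v‖) := by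
        gcongr
        exact (Q l).le_of_opNorm_le (hnorm l hl).2 v
    _ = K ^ 2 * lam ^ (l - k).toNat * ‖v‖ := by ring

end HyperbolicOnWith

section WeightedEstimates

variable {d : ℕ} {A : ℤ → (Ed d ≃L[ℝ] Ed d)} {K lam ω C : ℝ} {P Q : ℤ → (Ed d →L[ℝ] Ed d)}
  {f : ℤ → Ed d}

theorem norm_phi_stable_mul_wt_le (hH : HyperbolicOnWith A {k | 0 ≤ k} K lam P Q) (hω : 0 ≤ ω)
    (hf : ∀ k : ℤ, 0 ≤ k → ‖f k‖ * wt ω k ≤ C) {k l : ℤ} (hl : 0 ≤ l) (hlk : l ≤ k) :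
    ‖Phi A k l (P l (f l))‖ * wt ω k
      ≤ K ^ 2 * C * (lam ^ (k - l).toNat * (((k - l).toNat : ℝ) + 1) ^ ω) := by
  have hlam := hH.lam_pos
  calc ‖Phi A k l (P l (f l))‖ * wt ω k
      ≤ K ^ 2 * lam ^ (k - l).toNat * ‖f l‖ * (wt ω l * (((k - l).toNat : ℝ) + 1) ^ ω) :=
        mul_le_mul (hH.norm_phi_apply_stable_le hl (hl.trans hlk) hlk _) (wt_le_wt_mul hω hl hlk)
          (wt_pos ω k).le (by positivity)
    _ = K ^ 2 * (lam ^ (k - l).toNat * (((k - l).toNat : ℝ) + 1) ^ ω) * (‖f l‖ * wt ω l) := by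
        ring
    _ ≤ K ^ 2 * (lam ^ (k - l).toNat * (((k - l).toNat : ℝ) + 1) ^ ω) * C := by
        gcongr
        exact hf l hl
    _ = K ^ 2 * C * (lam ^ (k - l).toNat * (((k - l).toNat : ℝ) + 1) ^ ω) := by ring

theorem norm_stablePart_mul_wt_le (hH : HyperbolicOnWith A {k | 0 ≤ k} K lam P Q) (hω : 0 ≤ ω)
    (hf : ∀ k : ℤ, 0 ≤ k → ‖f k‖ * wt ω k ≤ C) {k : ℤ} (hk : 0 ≤ k) :
    ‖stablePart A P f k‖ * wt ω k ≤ K ^ 2 * C * ∑' m : ℕ, lam ^ m * ((m : ℝ) + 1) ^ ω := by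
  have hlam := hH.lam_pos
  have hC : 0 ≤ C := nonneg_of_norm_mul_wt_le (hf 0 le_rfl)
  lift k to ℕ using hk
  calc ‖stablePart A P f k‖ * wt ω k
      ≤ ∑ l ∈ Finset.range (k + 1), ‖Phi A k l (P l (f l))‖ * wt ω k := by
        rw [stablePart, Int.toNat_natCast, ← Finset.sum_mul]
        exact mul_le_mul_of_nonneg_right (norm_sum_le _ _) (wt_pos ω k).le
    _ ≤ ∑ l ∈ Finset.range (k + 1), K ^ 2 * C * (lam ^ (k - l) * (((k - l : ℕ) : ℝ) + 1) ^ ω) := by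
        refine Finset.sum_le_sum fun l hl => ?_
        have hlk : l ≤ k := Nat.lt_succ_iff.1 (Finset.mem_range.1 hl)
        have htoNat : ((k : ℤ) - l).toNat = k - l := by omega
        simpa only [htoNat] using
          norm_phi_stable_mul_wt_le hH hω hf (Int.natCast_nonneg l) (Int.ofNat_le.2 hlk)
    _ = K ^ 2 * C * ∑ m ∈ Finset.range (k + 1), lam ^ m * ((m : ℝ) + 1) ^ ω := by
        rw [← Finset.mul_sum,
          ← Finset.sum_range_reflect (fun m : ℕ => lam ^ m * ((m : ℝ) + 1) ^ ω)]
        simp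
    _ ≤ K ^ 2 * C * ∑' m : ℕ, lam ^ m * ((m : ℝ) + 1) ^ ω := by
        gcongr
        exact Summable.sum_le_tsum _ (fun m _ => by positivity)
          (summable_pow_mul_add_one_rpow hlam hH.lam_lt_one ω)

theorem norm_unstableTerm_mul_wt_le (hH : HyperbolicOnWith A {k | 0 ≤ k} K lam P Q)
    (hω : 0 ≤ ω) (hf : ∀ k : ℤ, 0 ≤ k → ‖f k‖ * wt ω k ≤ C) {k : ℤ} (hk : 0 ≤ k) (n : ℕ) :
    ‖unstableTerm A Q f k n‖ * wt ω k ≤ K ^ 2 * C * lam ^ n := by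
  have hlam := hH.lam_pos
  have hj : 0 ≤ k + 1 + n := by omega
  have hC : 0 ≤ C := nonneg_of_norm_mul_wt_le (hf 0 le_rfl)
  have htoNat : (k + 1 + n - k).toNat = n + 1 := by omega
  calc ‖unstableTerm A Q f k n‖ * wt ω k
      ≤ K ^ 2 * lam ^ (n + 1) * ‖f (k + 1 + n)‖ * wt ω (k + 1 + n) :=
        mul_le_mul
          (by simpa only [htoNat, unstableTerm] using hH.norm_phi_apply_unstable_le hk hj (by omega) _)
          (wt_mono hω hk (by omega)) (wt_pos ω k).le (by positivity)
    _ = K ^ 2 * lam ^ (n + 1) * (‖f (k + 1 + n)‖ * wt ω (k + 1 + n)) := by ring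
    _ ≤ K ^ 2 * lam ^ (n + 1) * C := by
        gcongr
        exact hf _ hj
    _ ≤ K ^ 2 * C * lam ^ n := by
        rw [mul_right_comm]
        exact mul_le_mul_of_nonneg_left (pow_le_pow_of_le_one hlam.le hH.lam_lt_one.le n.le_succ)
          (by positivity)

theorem summable_norm_unstableTerm (hH : HyperbolicOnWith A {k | 0 ≤ k} K lam P Q)
    (hω : 0 ≤ ω) (hf : ∀ k : ℤ, 0 ≤ k → ‖f k‖ * wt ω k ≤ C) {k : ℤ} (hk : 0 ≤ k) :
    Summable (fun n => ‖unstableTerm A Q f k n‖) :=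
  (summable_mul_right_iff (wt_pos ω k).ne').1 <|
    Summable.of_nonneg_of_le (fun _ => mul_nonneg (norm_nonneg _) (wt_pos ω k).le)
      (norm_unstableTerm_mul_wt_le hH hω hf hk)
      ((summable_geometric_of_lt_one hH.lam_pos.le hH.lam_lt_one).mul_left _)

theorem norm_unstablePart_mul_wt_le (hH : HyperbolicOnWith A {k | 0 ≤ k} K lam P Q)
    (hω : 0 ≤ ω) (hf : ∀ k : ℤ, 0 ≤ k → ‖f k‖ * wt ω k ≤ C) {k : ℤ} (hk : 0 ≤ k) :
    ‖unstablePart A Q f k‖ * wt ω k ≤ K ^ 2 * C * (1 - lam)⁻¹ := by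
  have hs := summable_norm_unstableTerm hH hω hf hk
  have hgeom := summable_geometric_of_lt_one hH.lam_pos.le hH.lam_lt_one
  calc ‖unstablePart A Q f k‖ * wt ω k ≤ (∑' n, ‖unstableTerm A Q f k n‖) * wt ω k :=
        mul_le_mul_of_nonneg_right (norm_tsum_le_tsum_norm hs) (wt_pos ω k).le
    _ = ∑' n, ‖unstableTerm A Q f k n‖ * wt ω k := tsum_mul_right.symm
    _ ≤ ∑' n : ℕ, K ^ 2 * C * lam ^ n :=
        Summable.tsum_le_tsum (norm_unstableTerm_mul_wt_le hH hω hf hk) (hs.mul_right _)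
          (hgeom.mul_left _)
    _ = K ^ 2 * C * (1 - lam)⁻¹ := by
        rw [tsum_mul_left, tsum_geometric_of_lt_one hH.lam_pos.le hH.lam_lt_one]

end WeightedEstimates

theorem hyperbolic_implies_perron_pos_general (d : ℕ) (ω : ℝ) (hω : 0 ≤ ω)
    (A : ℤ → (Ed d ≃L[ℝ] Ed d))
    (hhyp : IsHyperbolicOn A {k : ℤ | 0 ≤ k}) :
    ∀ f : ℤ → Ed d, f 0 = 0 → (∃ C : ℝ, ∀ k : ℤ, 0 ≤ k → ‖f k‖ * wt ω k ≤ C) →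
      ∃ x : ℤ → Ed d, (∃ C : ℝ, ∀ k : ℤ, 0 ≤ k → ‖x k‖ * wt ω k ≤ C) ∧
        ∀ k : ℤ, 0 ≤ k → x (k + 1) = A k (x k) + f (k + 1) := by
  obtain ⟨K, lam, P, Q, hH⟩ := hhyp
  rintro f - ⟨C, hf⟩
  refine ⟨fun k => stablePart A P f k - unstablePart A Q f k,
    ⟨K ^ 2 * C * ∑' m : ℕ, lam ^ m * ((m : ℝ) + 1) ^ ω + K ^ 2 * C * (1 - lam)⁻¹,
      fun k hk => ?_⟩,
    fun k hk => stablePart_sub_unstablePart_succ hk (hH.proj_add_proj (show 0 ≤ k + 1 by omega))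
      (summable_norm_unstableTerm hH hω hf hk).of_norm⟩
  calc ‖stablePart A P f k - unstablePart A Q f k‖ * wt ω k
      ≤ ‖stablePart A P f k‖ * wt ω k + ‖unstablePart A Q f k‖ * wt ω k := by
        rw [← add_mul]
        exact mul_le_mul_of_nonneg_right (norm_sub_le _ _) (wt_pos ω k).le
    _ ≤ _ := add_le_add (norm_stablePart_mul_wt_le hH hω hf hk)
        (norm_unstablePart_mul_wt_le hH hω hf hk)

/-- hyperbolicity on ℤ+ implies Perron property B_ω(ℤ+). -/
theorem hyperbolic_implies_perron_pos (d : ℕ) (hd : 1 ≤ d) (ω M : ℝ) (hω : 0 ≤ ω) (hM : 0 < M)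
    (A : ℤ → (Ed d ≃L[ℝ] Ed d))
    (hA : ∀ k : ℤ, 0 ≤ k → ‖(A k : Ed d →L[ℝ] Ed d)‖ ≤ M ∧
      ‖((A k).symm : Ed d →L[ℝ] Ed d)‖ ≤ M)
    (hhyp : IsHyperbolicOn A {k : ℤ | 0 ≤ k}) :
    ∀ f : ℤ → Ed d, f 0 = 0 → (∃ C : ℝ, ∀ k : ℤ, 0 ≤ k → ‖f k‖ * wt ω k ≤ C) →
      ∃ x : ℤ → Ed d, (∃ C : ℝ, ∀ k : ℤ, 0 ≤ k → ‖x k‖ * wt ω k ≤ C) ∧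
        ∀ k : ℤ, 0 ≤ k → x (k + 1) = A k (x k) + f (k + 1) :=
  hyperbolic_implies_perron_pos_general d ω hω A hhyp
end
end

section
/- Let d ≥ 1, γ ≥ 0, and let (A_k)_{k∈ℤ} be a sequence of linear isomorphisms of ℝ^d. Let (w_k)_{k∈ℤ} be a sequence of vectors in ℝ^d with ‖(w_k)‖_γ < ∞. Suppose there is a constant Q > 0 such that for every integer N > 0 there exists a finite sequence (v^N_k)_{k=−N,…,N} of vectors in ℝ^d satisfying v^N_{k+1} = A_k v^N_k + w_{k+1} for all −N ≤ k ≤ N−1 and |v^N_k|(|k|+1)^γ ≤ Q for all −N ≤ k ≤ N. Then there exists a sequence (v_k)_{k∈ℤ} such that v_{k+1} = A_k v_k + w_{k+1} for every k ∈ ℤ and ‖(v_k)‖_γ ≤ Q. -/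
/-!
The solution on `ℤ` is found through its value at time `0`. A solution on `[-N, N]` is determined
by that value, so the admissible initial values `x`, those whose orbit satisfies the weighted bound
on `[-N, N]`, form a nonempty set; it is closed because the evolution maps are homeomorphisms, and
contained in the compact ball of radius `Q` (the weight is `1` at `k = 0`). These sets decrease in
`N`, so by Cantor's intersection theorem some `x` is admissible for every `N`, and its orbit is the
required solution.
-/

noncomputable section

open Filter Topology

section Evolution

variable {X : Type*} [TopologicalSpace X]

def forwardEvolution (f : ℤ → X ≃ₜ X) : ℕ → X ≃ₜ X
  | 0 => Homeomorph.refl X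
  | n + 1 => (forwardEvolution f n).trans (f n)

def backwardEvolution (f : ℤ → X ≃ₜ X) : ℕ → X ≃ₜ X
  | 0 => Homeomorph.refl X
  | n + 1 => (backwardEvolution f n).trans (f (-(n + 1))).symm

/-- `evolution f k` sends the value at time `0` of an orbit of the nonautonomous system
`x (k + 1) = f k (x k)` to its value at time `k`. -/
def evolution (f : ℤ → X ≃ₜ X) : ℤ → X ≃ₜ X
  | Int.ofNat n => forwardEvolution f n
  | Int.negSucc n => backwardEvolution f (n + 1)

theorem evolution_add_one (f : ℤ → X ≃ₜ X) (k : ℤ) (x : X) :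
    evolution f (k + 1) x = f k (evolution f k x) := by
  match k with
  | Int.ofNat n => rfl
  | Int.negSucc 0 => exact ((f (-1)).apply_symm_apply x).symm
  | Int.negSucc (n + 1) => exact ((f (Int.negSucc (n + 1))).apply_symm_apply _).symm

theorem eq_evolution_of_recurrence (f : ℤ → X ≃ₜ X) {v : ℤ → X} {N : ℕ}
    (hv : ∀ k : ℤ, -(N : ℤ) ≤ k → k ≤ (N : ℤ) - 1 → v (k + 1) = f k (v k))
    {k : ℤ} (hNk : -(N : ℤ) ≤ k) (hkN : k ≤ N) : v k = evolution f k (v 0) := by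
  rcases le_total 0 k with hk | hk
  · induction k, hk using Int.leInduction with
    | base => rfl
    | succ j hj ih => rw [hv j (by omega) (by omega), ih (by omega) (by omega), evolution_add_one]
  · induction k, hk using Int.leInductionDown with
    | base => rfl
    | pred j hj ih =>
      apply (f (j - 1)).injective
      rw [← evolution_add_one, sub_add_cancel, ← hv (j - 1) hNk (by omega), sub_add_cancel,
        ih (by omega) (by omega)]

theorem exists_orbit_forall_mem_of_finite_orbits (f : ℤ → X ≃ₜ X) {S : ℤ → Set X}
    (hS : ∀ k, IsClosed (S k)) (hS₀ : IsCompact (S 0))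
    (hfin : ∀ N : ℕ, 0 < N → ∃ v : ℤ → X,
      (∀ k : ℤ, -(N : ℤ) ≤ k → k ≤ (N : ℤ) - 1 → v (k + 1) = f k (v k)) ∧
      (∀ k : ℤ, -(N : ℤ) ≤ k → k ≤ (N : ℤ) → v k ∈ S k)) :
    ∃ v : ℤ → X, (∀ k : ℤ, v (k + 1) = f k (v k)) ∧ ∀ k : ℤ, v k ∈ S k := by
  set K : ℕ → Set X := fun N =>
    {x | ∀ k : ℤ, -((N + 1 : ℕ) : ℤ) ≤ k → k ≤ ((N + 1 : ℕ) : ℤ) → evolution f k x ∈ S k}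
  have hK_closed (N : ℕ) : IsClosed (K N) := by
    simp only [K, Set.ofPred_forall]
    exact isClosed_iInter fun k => isClosed_iInter fun _ => isClosed_iInter fun _ =>
      (hS k).preimage (evolution f k).continuous
  have hK_succ (N : ℕ) : K (N + 1) ⊆ K N := fun x hx k h₁ h₂ => hx k (by omega) (by omega)
  have hK_nonempty (N : ℕ) : (K N).Nonempty := by
    obtain ⟨v, hrec, hmem⟩ := hfin (N + 1) N.succ_pos
    exact ⟨v 0, fun k h₁ h₂ => eq_evolution_of_recurrence f hrec h₁ h₂ ▸ hmem k h₁ h₂⟩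
  have hK₀ : IsCompact (K 0) :=
    hS₀.of_isClosed_subset (hK_closed 0) fun x hx => hx 0 (by omega) (by omega)
  obtain ⟨x, hx⟩ := IsCompact.nonempty_iInter_of_sequence_nonempty_isCompact_isClosed K hK_succ
    hK_nonempty hK₀ hK_closed
  refine ⟨fun k => evolution f k x, fun k => evolution_add_one f k x, fun k => ?_⟩
  exact Set.mem_iInter.mp hx k.natAbs k (by omega) (by omega)

end Evolution

theorem finite_bounded_to_infinite_bounded_general (d : ℕ) (γ : ℝ)
    (A : ℤ → (Ed d ≃L[ℝ] Ed d)) (w : ℤ → Ed d)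
    (Q : ℝ)
    (hfin : ∀ N : ℕ, 0 < N → ∃ v : ℤ → Ed d,
      (∀ k : ℤ, -(N : ℤ) ≤ k → k ≤ (N : ℤ) - 1 → v (k + 1) = A k (v k) + w (k + 1)) ∧
      (∀ k : ℤ, -(N : ℤ) ≤ k → k ≤ (N : ℤ) → ‖v k‖ * wt γ k ≤ Q)) :
    ∃ v : ℤ → Ed d, (∀ k : ℤ, v (k + 1) = A k (v k) + w (k + 1)) ∧
      ∀ k : ℤ, ‖v k‖ * wt γ k ≤ Q := by
  have hS : ∀ k, IsClosed {x : Ed d | ‖x‖ * wt γ k ≤ Q} := fun k =>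
    isClosed_le (continuous_norm.mul continuous_const) continuous_const
  have hS₀ : {x : Ed d | ‖x‖ * wt γ 0 ≤ Q} = Metric.closedBall 0 Q := by
    ext x; simp [wt]
  exact exists_orbit_forall_mem_of_finite_orbits
    (fun k => (A k).toHomeomorph.trans (Homeomorph.addRight (w (k + 1)))) hS
    (hS₀ ▸ isCompact_closedBall 0 Q) hfin

/-- from uniformly bounded finite solutions to a bounded solution on ℤ. -/
theorem finite_bounded_to_infinite_bounded (d : ℕ) (hd : 1 ≤ d) (γ : ℝ) (hγ : 0 ≤ γ)
    (A : ℤ → (Ed d ≃L[ℝ] Ed d)) (w : ℤ → Ed d)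
    (hw : ∃ C : ℝ, ∀ k : ℤ, ‖w k‖ * wt γ k ≤ C)
    (Q : ℝ) (hQ : 0 < Q)
    (hfin : ∀ N : ℕ, 0 < N → ∃ v : ℤ → Ed d,
      (∀ k : ℤ, -(N : ℤ) ≤ k → k ≤ (N : ℤ) - 1 → v (k + 1) = A k (v k) + w (k + 1)) ∧
      (∀ k : ℤ, -(N : ℤ) ≤ k → k ≤ (N : ℤ) → ‖v k‖ * wt γ k ≤ Q)) :
    ∃ v : ℤ → Ed d, (∀ k : ℤ, v (k + 1) = A k (v k) + w (k + 1)) ∧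
      ∀ k : ℤ, ‖v k‖ * wt γ k ≤ Q :=
  finite_bounded_to_infinite_bounded_general d γ A w Q hfin
end
end
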